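/- arXiv:2403.15883 — 3 statements merged into one kernel-verified Lean document; each statement's English description precedes it below -/
import Mathlib

section
/- Willems' fundamental lemma (Theorem 1): Let (A,B,C,D) define a discrete-time LTI system with A ∈ ℝ^{n×n}, B ∈ ℝ^{n×m}, C ∈ ℝ^{p×n}, D ∈ ℝ^{p×m}, with the pair (A,B) controllable and the pair (A,C) observable. Let (u^d, y^d) be an input–output trajectory of the system of length N₀, and assume u^d is persistently exciting of order L+n. Then a pair of sequences (ū, ȳ) of length L is an input–output trajectory of the system if and only if there exists α ∈ ℝ^{N₀−L+1} such that H_L(u^d) α = ū and H_L(y^d) α = ȳ (with ū, ȳ stacked as column vectors in ℝ^{mL} and ℝ^{pL}). -/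
open Matrix

/-- Block Hankel matrix of depth `L` built from the first `N₀` samples of an
`ℝ^m`-valued signal `u`, with `(i, j)` block entry `u (i + j)`. -/
def hankelMat (m L N₀ : ℕ) (u : ℕ → Fin m → ℝ) :
    Matrix (Fin L × Fin m) (Fin (N₀ - L + 1)) ℝ :=
  Matrix.of fun ir j => u ((ir.1 : ℕ) + (j : ℕ)) ir.2

/-- `u` is persistently exciting of order `L` (given data length `N₀`) if its
depth-`L` block Hankel matrix has full row rank `m * L`. -/
def PersistentlyExciting (m L N₀ : ℕ) (u : ℕ → Fin m → ℝ) : Prop :=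
  (hankelMat m L N₀ u).rank = m * L

/-- Controllability matrix `[B, A B, …, A^{n-1} B]`. -/
def ctrbMat {n m : ℕ} (A : Matrix (Fin n) (Fin n) ℝ) (B : Matrix (Fin n) (Fin m) ℝ) :
    Matrix (Fin n) (Fin n × Fin m) ℝ :=
  Matrix.of fun i kj => (A ^ (kj.1 : ℕ) * B) i kj.2

/-- The pair `(A, B)` is controllable. -/
def Controllable {n m : ℕ} (A : Matrix (Fin n) (Fin n) ℝ)
    (B : Matrix (Fin n) (Fin m) ℝ) : Prop :=
  (ctrbMat A B).rank = n

/-- Observability matrix `O_l(A, C) = [C; C A; …; C A^{l-1}]`. -/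
def obsMat {n p : ℕ} (A : Matrix (Fin n) (Fin n) ℝ) (C : Matrix (Fin p) (Fin n) ℝ)
    (l : ℕ) : Matrix (Fin l × Fin p) (Fin n) ℝ :=
  Matrix.of fun ki j => (C * A ^ (ki.1 : ℕ)) ki.2 j

/-- The pair `(A, C)` is observable. -/
def Observable {n p : ℕ} (A : Matrix (Fin n) (Fin n) ℝ)
    (C : Matrix (Fin p) (Fin n) ℝ) : Prop :=
  (obsMat A C n).rank = n

/-- `(u, y)` (restricted to its first `L` samples) is an input–output trajectory of
the LTI system `(A, B, C, D)`: there is an internal state sequence realizing it. -/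
def IsIOTraj {n m p : ℕ} (A : Matrix (Fin n) (Fin n) ℝ) (B : Matrix (Fin n) (Fin m) ℝ)
    (C : Matrix (Fin p) (Fin n) ℝ) (D : Matrix (Fin p) (Fin m) ℝ) (L : ℕ)
    (u : ℕ → Fin m → ℝ) (y : ℕ → Fin p → ℝ) : Prop :=
  ∃ x : ℕ → Fin n → ℝ, ∀ k < L,
    x (k + 1) = A.mulVec (x k) + B.mulVec (u k) ∧
    y k = C.mulVec (x k) + D.mulVec (u k)

/-! With `x` a state sequence of the data, every column `[x(j); u(j); …; u(j+L-1)]` of the data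
matrix holds the initial state and the inputs of a length-`L` trajectory, and by linearity and time invariance so does every combination
of columns; since a trajectory is determined by its initial state and inputs, the lemma reduces to
this matrix having full row rank. A left-kernel vector `(ξ, η)` can be pushed through the state
equation `i ≤ n` times, giving vectors `(ξ Aⁱ, ξ Aⁱ⁻¹ B, …, ξ B, η)` that annihilate the depth
`L + i` windows of `(x, u)`. Weighting them by the coefficients of the characteristic polynomial
removes the state by Cayley–Hamilton, so persistency of excitation makes the weighted input part
vanish. As `χ_A` is monic, this is a recurrence forcing `η = 0` and `ξ Aᵏ B = 0` for all `k`, hence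
`ξ = 0` by controllability. -/

open Finset

namespace Matrix

variable {K ι κ : Type*} [Field K] [Fintype ι] [Fintype κ]

theorem linearIndependent_row_of_rank_eq_card {M : Matrix ι κ K}
    (h : M.rank = Fintype.card ι) : LinearIndependent K M.row := by
  rw [linearIndependent_iff_card_eq_finrank_span, Set.finrank, ← M.rank_eq_finrank_span_row, h]

theorem eq_zero_of_vecMul_eq_zero_of_rank_eq_card {M : Matrix ι κ K}
    (h : M.rank = Fintype.card ι) {v : ι → K} (hv : v ᵥ* M = 0) : v = 0 :=
  vecMul_injective_iff.mpr (linearIndependent_row_of_rank_eq_card h) (by simp [hv])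

theorem mulVec_surjective_of_vecMul_injective {M : Matrix ι κ K}
    (h : Function.Injective M.vecMul) : Function.Surjective M.mulVec := by
  have hrange : LinearMap.range M.mulVecLin = ⊤ := Submodule.eq_top_of_finrank_eq <| by
    rw [Module.finrank_fintype_fun_eq_card]
    exact (vecMul_injective_iff.mp h).rank_matrix
  exact fun b => LinearMap.range_eq_top.mp hrange b

end Matrix

theorem eq_zero_of_recurrence_of_eventually_zero {R M : Type*} [Ring R] [AddCommGroup M]
    [Module R M] {n N : ℕ} {d : ℕ → R} (hd : d 0 = 1) {v : ℕ → M} (hv : ∀ s, N ≤ s → v s = 0)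
    (hrec : ∀ s < N, ∑ i ∈ range (n + 1), d i • v (s + i) = 0) : v = 0 := by
  suffices ∀ k s, N ≤ s + k → v s = 0 from funext fun s => this N s (by omega)
  intro k
  induction k with
  | zero => exact hv
  | succ k ih =>
    intro s hs
    rcases le_or_gt N s with hNs | hsN
    · exact hv s hNs
    · have := hrec s hsN
      rwa [sum_range_succ', sum_eq_zero fun i _ => by rw [ih (s + (i + 1)) (by omega), smul_zero],
        hd, one_smul, zero_add, add_zero] at this

theorem Matrix.sum_charpoly_coeff_rev_smul_pow_eq_zero {n R : Type*} [Fintype n] [DecidableEq n]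
    [CommRing R] [Nontrivial R] (A : Matrix n n R) :
    ∑ i ∈ range (Fintype.card n + 1),
      A.charpoly.coeff (Fintype.card n - i) • A ^ (Fintype.card n - i) = 0 := by
  have := A.aeval_self_charpoly
  rw [Polynomial.aeval_eq_sum_range, charpoly_natDegree_eq_dim] at this
  rw [← this, ← sum_range_reflect]
  refine sum_congr rfl fun i hi => ?_
  rw [Nat.add_sub_cancel, Nat.sub_sub_self (mem_range_succ_iff.mp hi)]

theorem vecMul_hankelMat_apply {m L N₀ : ℕ} (u η : ℕ → Fin m → ℝ) (j : Fin (N₀ - L + 1)) :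
    ((fun kr : Fin L × Fin m => η kr.1 kr.2) ᵥ* hankelMat m L N₀ u) j
      = ∑ k ∈ range L, η k ⬝ᵥ u (k + j) := by
  rw [← Fin.sum_univ_eq_sum_range (fun k => η k ⬝ᵥ u (k + j))]
  simp [vecMul, dotProduct, hankelMat, Fintype.sum_prod_type]

def windowSum {V : Type*} [AddCommMonoid V] [Module ℝ V] {K : ℕ} (α : Fin K → ℝ) (w : ℕ → V)
    (k : ℕ) : V :=
  ∑ j, α j • w (k + j)

theorem hankelMat_mulVec_apply {m L N₀ : ℕ} (u : ℕ → Fin m → ℝ) (α : Fin (N₀ - L + 1) → ℝ)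
    (i : Fin L) (r : Fin m) : (hankelMat m L N₀ u *ᵥ α) (i, r) = windowSum α u i r := by
  simp [mulVec, dotProduct, hankelMat, windowSum, mul_comm]

theorem PersistentlyExciting.eq_zero_of_sum_dotProduct_eq_zero {m d N₀ : ℕ}
    {u : ℕ → Fin m → ℝ} (hPE : PersistentlyExciting m d N₀ u) (hd : d ≤ N₀)
    {ζ : ℕ → Fin m → ℝ} (hζ : ∀ j, j + d ≤ N₀ → ∑ s ∈ range d, ζ s ⬝ᵥ u (s + j) = 0)
    {s : ℕ} (hs : s < d) : ζ s = 0 := by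
  have hrank : (hankelMat m d N₀ u).rank = Fintype.card (Fin d × Fin m) := by
    rw [hPE, Fintype.card_prod, Fintype.card_fin, Fintype.card_fin, mul_comm]
  have := Matrix.eq_zero_of_vecMul_eq_zero_of_rank_eq_card hrank (v := fun sr => ζ sr.1 sr.2) <|
    funext fun j => by rw [vecMul_hankelMat_apply, hζ j (by omega), Pi.zero_apply]
  funext r
  exact congrFun this (⟨s, hs⟩, r)

theorem Controllable.eq_zero_of_vecMul_pow_mul_eq_zero {n m : ℕ} {A : Matrix (Fin n) (Fin n) ℝ}
    {B : Matrix (Fin n) (Fin m) ℝ} (hAB : Controllable A B) {ξ : Fin n → ℝ}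
    (hξ : ∀ k < n, ξ ᵥ* (A ^ k * B) = 0) : ξ = 0 := by
  refine Matrix.eq_zero_of_vecMul_eq_zero_of_rank_eq_card (M := ctrbMat A B)
    (by rw [hAB, Fintype.card_fin]) ?_
  funext ⟨k, r⟩
  exact congrFun (hξ k k.isLt) r

section LeftKernel

variable {n m : ℕ} (A : Matrix (Fin n) (Fin n) ℝ) (B : Matrix (Fin n) (Fin m) ℝ)

def markovPrepend (ξ : Fin n → ℝ) (η : ℕ → Fin m → ℝ) (s : ℕ) : Fin m → ℝ :=
  if s < n then ξ ᵥ* (A ^ (n - 1 - s) * B) else η (s - n)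

variable {A B} {N₀ L : ℕ} {x : ℕ → Fin n → ℝ} {u : ℕ → Fin m → ℝ} {ξ : Fin n → ℝ}
  {η : ℕ → Fin m → ℝ}

theorem markovPrepend_shift_annihilates (hx : ∀ k < N₀, x (k + 1) = A *ᵥ x k + B *ᵥ u k)
    (hη : ∀ k, L ≤ k → η k = 0)
    (h : ∀ j, j + L ≤ N₀ → ξ ⬝ᵥ x j + ∑ k ∈ range L, η k ⬝ᵥ u (k + j) = 0)
    {i : ℕ} (hi : i ≤ n) {j : ℕ} (hj : j + (L + n - i) ≤ N₀) :
    ξ ⬝ᵥ (A ^ (n - i) *ᵥ x j)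
      + ∑ s ∈ range (L + n), markovPrepend A B ξ η (s + i) ⬝ᵥ u (s + j) = 0 := by
  induction hi using Nat.decreasingInduction generalizing j with
  | self =>
    have hmp : ∀ s, markovPrepend A B ξ η (s + n) = η s := fun s => by
      simp [markovPrepend]
    simp only [hmp, sum_range_add, Nat.sub_self, pow_zero, one_mulVec]
    rw [sum_eq_zero (s := range n) fun k _ => by rw [hη (L + k) (by omega), zero_dotProduct],
      add_zero]
    exact h j (by omega)
  | of_succ k hk ih =>
    have hstep := ih (j := j + 1) (by omega)
    rw [hx j (by omega), mulVec_add, mulVec_mulVec, mulVec_mulVec, dotProduct_add,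
      ← pow_succ, show n - (k + 1) + 1 = n - k by omega] at hstep
    have hmp_k : markovPrepend A B ξ η k = ξ ᵥ* (A ^ (n - (k + 1)) * B) := by
      simp [markovPrepend, hk, Nat.sub_sub, add_comm 1 k]
    have hmp_end : markovPrepend A B ξ η (L + n + k) = 0 := by
      rw [markovPrepend, if_neg (by omega), hη _ (by omega)]
    have hsplit := sum_range_succ' (fun s => markovPrepend A B ξ η (s + k) ⬝ᵥ u (s + j)) (L + n)
    rw [sum_range_succ, hmp_end, zero_dotProduct, add_zero] at hsplit
    rw [hsplit, zero_add, zero_add, hmp_k, ← dotProduct_mulVec, ← hstep]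
    simp only [add_right_comm _ 1, ← add_assoc]
    ring

theorem eq_zero_of_annihilates_state_and_inputs (hAB : Controllable A B)
    (hx : ∀ k < N₀, x (k + 1) = A *ᵥ x k + B *ᵥ u k) (hPE : PersistentlyExciting m (L + n) N₀ u)
    (hLN : L + n ≤ N₀) (hη : ∀ k, L ≤ k → η k = 0)
    (h : ∀ j, j + L ≤ N₀ → ξ ⬝ᵥ x j + ∑ k ∈ range L, η k ⬝ᵥ u (k + j) = 0) :
    ξ = 0 ∧ η = 0 := by
  set v := markovPrepend A B ξ η
  set d : ℕ → ℝ := fun i => A.charpoly.coeff (n - i)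
  have hCH : ∑ i ∈ range (n + 1), d i • A ^ (n - i) = 0 := by
    simpa using A.sum_charpoly_coeff_rev_smul_pow_eq_zero
  have hrec : ∀ s < L + n, ∑ i ∈ range (n + 1), d i • v (s + i) = 0 := by
    refine fun s hs => hPE.eq_zero_of_sum_dotProduct_eq_zero hLN
      (ζ := fun s => ∑ i ∈ range (n + 1), d i • v (s + i)) (fun j hj => ?_) hs
    calc ∑ s ∈ range (L + n), (∑ i ∈ range (n + 1), d i • v (s + i)) ⬝ᵥ u (s + j)
        = ∑ i ∈ range (n + 1), d i * ∑ s ∈ range (L + n), v (s + i) ⬝ᵥ u (s + j) := by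
          simp only [sum_dotProduct, smul_dotProduct, smul_eq_mul, mul_sum]
          exact sum_comm
      _ = ∑ i ∈ range (n + 1), d i * -(ξ ⬝ᵥ (A ^ (n - i) *ᵥ x j)) := by
          refine sum_congr rfl fun i hi => ?_
          rw [eq_neg_of_add_eq_zero_right (markovPrepend_shift_annihilates hx hη h
            (mem_range_succ_iff.mp hi) (by omega))]
      _ = -(ξ ⬝ᵥ ((∑ i ∈ range (n + 1), d i • A ^ (n - i)) *ᵥ x j)) := by
          simp [sum_mulVec, smul_mulVec, dotProduct_sum, mul_neg]
      _ = 0 := by rw [hCH, zero_mulVec, dotProduct_zero, neg_zero]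
  have hv : v = 0 := by
    refine eq_zero_of_recurrence_of_eventually_zero
      (by simpa [d] using A.charpoly_monic.coeff_natDegree) (fun s hs => ?_) hrec
    simp only [v, markovPrepend, if_neg (show ¬s < n by omega), hη _ (show L ≤ s - n by omega)]
  refine ⟨hAB.eq_zero_of_vecMul_pow_mul_eq_zero fun k hk => ?_, funext fun k => ?_⟩
  · have := congrFun hv (n - 1 - k)
    simpa only [v, markovPrepend, if_pos (show n - 1 - k < n by omega),
      show n - 1 - (n - 1 - k) = k by omega, Pi.zero_apply] using this
  · simpa [v, markovPrepend] using congrFun hv (k + n)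

end LeftKernel

def stateInputMat {n m : ℕ} (L N₀ : ℕ) (x : ℕ → Fin n → ℝ) (u : ℕ → Fin m → ℝ) :
    Matrix (Fin n ⊕ (Fin L × Fin m)) (Fin (N₀ - L + 1)) ℝ :=
  fromRows (of fun i j => x j i) (hankelMat m L N₀ u)

section DataMatrix

variable {n m : ℕ} {A : Matrix (Fin n) (Fin n) ℝ} {B : Matrix (Fin n) (Fin m) ℝ} {N₀ L : ℕ}
  {x : ℕ → Fin n → ℝ} {u : ℕ → Fin m → ℝ}

theorem stateInputMat_vecMul_injective (hAB : Controllable A B)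
    (hx : ∀ k < N₀, x (k + 1) = A *ᵥ x k + B *ᵥ u k) (hPE : PersistentlyExciting m (L + n) N₀ u)
    (hLN : L + n ≤ N₀) : Function.Injective (stateInputMat L N₀ x u).vecMul := by
  refine (injective_iff_map_eq_zero (stateInputMat L N₀ x u).vecMulLinear).mpr fun g hg => ?_
  set η : ℕ → Fin m → ℝ := fun k r => if h : k < L then g (Sum.inr (⟨k, h⟩, r)) else 0
  have hg_inr : g ∘ Sum.inr = fun kr : Fin L × Fin m => η kr.1 kr.2 := by
    funext ⟨k, r⟩
    simp [η]
  have hsplit := Sum.elim_comp_inl_inr g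
  obtain ⟨hξ, hη⟩ := eq_zero_of_annihilates_state_and_inputs (ξ := g ∘ Sum.inl) (η := η)
    hAB hx hPE hLN (fun k hk => funext fun r => by simp [η, not_lt.mpr hk]) fun j hj => by
      have := congrFun hg ⟨j, by omega⟩
      rw [Matrix.vecMulLinear_apply, stateInputMat, ← hsplit, sumElim_vecMul_fromRows, hg_inr,
        Pi.add_apply, vecMul_hankelMat_apply] at this
      simpa [vecMul, dotProduct] using this
  rw [← hsplit, hξ, hg_inr, hη]
  ext (i | ⟨k, r⟩) <;> rfl

theorem exists_windowSum_eq (hAB : Controllable A B)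
    (hx : ∀ k < N₀, x (k + 1) = A *ᵥ x k + B *ᵥ u k) (hPE : PersistentlyExciting m (L + n) N₀ u)
    (hLN : L + n ≤ N₀) (x₀ : Fin n → ℝ) (w : ℕ → Fin m → ℝ) :
    ∃ α : Fin (N₀ - L + 1) → ℝ, windowSum α x 0 = x₀ ∧ ∀ k < L, windowSum α u k = w k := by
  obtain ⟨α, hα⟩ := Matrix.mulVec_surjective_of_vecMul_injective
    (stateInputMat_vecMul_injective hAB hx hPE hLN) (Sum.elim x₀ fun kr => w kr.1 kr.2)
  rw [stateInputMat, fromRows_mulVec] at hα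
  refine ⟨α, funext fun i => ?_, fun k hk => funext fun r => ?_⟩
  · have := congrFun hα (Sum.inl i)
    simpa [windowSum, mulVec, dotProduct, mul_comm] using this
  · have := congrFun hα (Sum.inr (⟨k, hk⟩, r))
    rwa [Sum.elim_inr, Sum.elim_inr, hankelMat_mulVec_apply] at this

end DataMatrix

section Trajectories

variable {n m p : ℕ} {A : Matrix (Fin n) (Fin n) ℝ} {B : Matrix (Fin n) (Fin m) ℝ}
  {C : Matrix (Fin p) (Fin n) ℝ} {D : Matrix (Fin p) (Fin m) ℝ} {N K : ℕ}
  {x : ℕ → Fin n → ℝ} {u : ℕ → Fin m → ℝ} {y : ℕ → Fin p → ℝ}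

theorem windowSum_mulVec_add {q : ℕ} (P : Matrix (Fin q) (Fin n) ℝ) (Q : Matrix (Fin q) (Fin m) ℝ)
    {f : ℕ → Fin q → ℝ} (α : Fin K → ℝ) {k : ℕ}
    (hf : ∀ j : Fin K, f (k + j) = P *ᵥ x (k + j) + Q *ᵥ u (k + j)) :
    windowSum α f k = P *ᵥ windowSum α x k + Q *ᵥ windowSum α u k := by
  simp only [windowSum, hf, mulVec_sum, mulVec_smul, smul_add, sum_add_distrib]

theorem windowSum_trajectory
    (hxy : ∀ k < N, x (k + 1) = A *ᵥ x k + B *ᵥ u k ∧ y k = C *ᵥ x k + D *ᵥ u k)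
    (α : Fin K → ℝ) {k : ℕ} (hk : k + K ≤ N) :
    windowSum α x (k + 1) = A *ᵥ windowSum α x k + B *ᵥ windowSum α u k ∧
      windowSum α y k = C *ᵥ windowSum α x k + D *ᵥ windowSum α u k := by
  have hlt (j : Fin K) : k + j < N := by omega
  constructor
  · rw [← windowSum_mulVec_add A B (f := fun i => x (i + 1)) α fun j => (hxy _ (hlt j)).1]
    simp only [windowSum, add_right_comm]
  · exact windowSum_mulVec_add C D α fun j => (hxy _ (hlt j)).2

theorem state_eq_of_init_eq {L : ℕ} {x' : ℕ → Fin n → ℝ}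
    (hx : ∀ k < L, x (k + 1) = A *ᵥ x k + B *ᵥ u k)
    (hx' : ∀ k < L, x' (k + 1) = A *ᵥ x' k + B *ᵥ u k) (h0 : x 0 = x' 0) {k : ℕ} (hk : k ≤ L) :
    x k = x' k := by
  induction k with
  | zero => exact h0
  | succ k ih => rw [hx k hk, hx' k hk, ih (by omega)]

end Trajectories

theorem fundamental_lemma_general {n m p : ℕ}
    (A : Matrix (Fin n) (Fin n) ℝ) (B : Matrix (Fin n) (Fin m) ℝ)
    (C : Matrix (Fin p) (Fin n) ℝ) (D : Matrix (Fin p) (Fin m) ℝ)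
    (hctrb : Controllable A B)
    (N₀ L : ℕ) (hLN : L + n ≤ N₀)
    (ud : ℕ → Fin m → ℝ) (yd : ℕ → Fin p → ℝ)
    (hdata : IsIOTraj A B C D N₀ ud yd)
    (hPE : PersistentlyExciting m (L + n) N₀ ud)
    (ubar : ℕ → Fin m → ℝ) (ybar : ℕ → Fin p → ℝ) :
    IsIOTraj A B C D L ubar ybar ↔
      ∃ α : Fin (N₀ - L + 1) → ℝ,
        (∀ (i : Fin L) (r : Fin m), (hankelMat m L N₀ ud).mulVec α (i, r) = ubar i r) ∧
        (∀ (i : Fin L) (r : Fin p), (hankelMat p L N₀ yd).mulVec α (i, r) = ybar i r) := by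
  obtain ⟨xd, hxd⟩ := hdata
  have hwin (α : Fin (N₀ - L + 1) → ℝ) (k : ℕ) (hk : k < L) :=
    windowSum_trajectory hxd α (k := k) (by omega)
  simp only [hankelMat_mulVec_apply]
  constructor
  · rintro ⟨xb, hxb⟩
    obtain ⟨α, hα0, hαu⟩ :=
      exists_windowSum_eq hctrb (fun k hk => (hxd k hk).1) hPE hLN (xb 0) ubar
    have hstate (k : ℕ) (hk : k ≤ L) : windowSum α xd k = xb k :=
      state_eq_of_init_eq (fun k hk => hαu k hk ▸ (hwin α k hk).1) (fun k hk => (hxb k hk).1)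
        hα0 hk
    refine ⟨α, fun i r => by rw [hαu i i.isLt], fun i r => ?_⟩
    rw [(hwin α i i.isLt).2, hstate i i.isLt.le, hαu i i.isLt, (hxb i i.isLt).2]
  · rintro ⟨α, hu, hy⟩
    refine ⟨windowSum α xd, fun k hk => ?_⟩
    rw [← funext (hu ⟨k, hk⟩), ← funext (hy ⟨k, hk⟩)]
    exact hwin α k hk

/-- **Willems' fundamental lemma.** If `(u^d, y^d)` is a length-`N₀` input–output
trajectory of a controllable and observable LTI system `(A, B, C, D)` and `u^d` is
persistently exciting of order `L + n`, then `(ū, ȳ)` is a length-`L` input–output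
trajectory of the system iff it is a linear combination `H_L(u^d) α = ū`,
`H_L(y^d) α = ȳ` of the columns of the data Hankel matrices. -/
theorem fundamental_lemma {n m p : ℕ}
    (A : Matrix (Fin n) (Fin n) ℝ) (B : Matrix (Fin n) (Fin m) ℝ)
    (C : Matrix (Fin p) (Fin n) ℝ) (D : Matrix (Fin p) (Fin m) ℝ)
    (hctrb : Controllable A B) (hobs : Observable A C)
    (N₀ L : ℕ) (hLN : L + n ≤ N₀)
    (ud : ℕ → Fin m → ℝ) (yd : ℕ → Fin p → ℝ)
    (hdata : IsIOTraj A B C D N₀ ud yd)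
    (hPE : PersistentlyExciting m (L + n) N₀ ud)
    (ubar : ℕ → Fin m → ℝ) (ybar : ℕ → Fin p → ℝ) :
    IsIOTraj A B C D L ubar ybar ↔
      ∃ α : Fin (N₀ - L + 1) → ℝ,
        (∀ (i : Fin L) (r : Fin m), (hankelMat m L N₀ ud).mulVec α (i, r) = ubar i r) ∧
        (∀ (i : Fin L) (r : Fin p), (hankelMat p L N₀ yd).mulVec α (i, r) = ybar i r) :=
  fundamental_lemma_general A B C D hctrb N₀ L hLN ud yd hdata hPE ubar ybar
end

section
/- Key rank lemma supporting the fundamental lemma: Let A ∈ ℝ^{n×n}, B ∈ ℝ^{n×m} with the pair (A,B) controllable, and let (u^d, x^d) satisfy x^d(t+1) = A x^d(t) + B u^d(t) for 0 ≤ t ≤ N₀−1. If u^d is persistently exciting of order L+n, then the stacked matrix [X₀; H_L(u^d)] ∈ ℝ^{(n+mL)×(N₀−L+1)}, where X₀ = [x^d(0) x^d(1) ⋯ x^d(N₀−L)], has full row rank n + mL. -/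
/-!
Let `(ξ, η)` be a left annihilator of `[X₀; H_L(u)]`. One step of the dynamics
`x (t + 1) = A x t + B u t` turns it into the left annihilator `(ξ A, (ξ B, η))` of the analogous
matrix with one more block row and one column fewer. After `k ≤ n` steps the state weight is
`ξ Aᵏ` and the input weights are those of `s = (ξ Aⁿ⁻¹ B, …, ξ B, η 0, …, η (L - 1), 0, …)`
shifted by `n - k`. Combining the steps `k = 0, …, n` with the coefficients of the characteristic
polynomial of `A` cancels the state weights (Cayley–Hamilton) and leaves a left annihilator of
`H_{L+n}(u)`, which is zero by persistency of excitation. As the characteristic polynomial is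
monic, this says that `s` satisfies a backward linear recurrence; since `s` vanishes eventually,
`s = 0`. Hence `η = 0` and `ξ Aᵉ B = 0` for `e < n`, so `ξ = 0` by controllability.
-/

open Matrix

theorem Matrix.rank_eq_card_height_iff {K ι κ : Type*} [Field K] [Fintype ι] [Fintype κ]
    (M : Matrix ι κ K) : M.rank = Fintype.card ι ↔ ∀ v : ι → K, v ᵥ* M = 0 → v = 0 := by
  have hrows : (∀ v : ι → K, v ᵥ* M = 0 → v = 0) ↔ LinearIndependent K M.row := by
    rw [← Matrix.vecMul_injective_iff, ← Matrix.coe_vecMulLinear, injective_iff_map_eq_zero]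
    rfl
  rw [hrows]
  refine ⟨fun h => ?_, LinearIndependent.rank_matrix⟩
  rw [linearIndependent_iff_card_eq_finrank_span, Set.finrank, ← h, rank_eq_finrank_span_row]

theorem Matrix.sum_charpoly_coeff_smul_vecMul_pow {R ι : Type*} [CommRing R] [Nontrivial R]
    [Fintype ι] [DecidableEq ι] (A : Matrix ι ι R) (ξ : ι → R) :
    ∑ k ∈ Finset.range (Fintype.card ι + 1), A.charpoly.coeff k • (ξ ᵥ* A ^ k) = 0 := by
  have h := congrArg (ξ ᵥ* ·) (Matrix.aeval_self_charpoly A)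
  simpa only [Polynomial.aeval_eq_sum_range, Matrix.charpoly_natDegree_eq_dim,
    Matrix.vecMul_sum, Matrix.vecMul_smul, Matrix.vecMul_zero] using h

theorem eq_zero_of_backward_recurrence {R V : Type*} [Semiring R] [AddCommMonoid V] [Module R V]
    {p K : ℕ} (c : ℕ → R) (hc : c p = 1) (s : ℕ → V) (hs : ∀ r, K ≤ r → s r = 0)
    (hrec : ∀ r < K, ∑ i ∈ Finset.range (p + 1), c i • s (r + (p - i)) = 0) (r : ℕ) :
    s r = 0 := by
  suffices ∀ d r, K ≤ r + d → s r = 0 from this K r (by omega)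
  intro d
  induction d with
  | zero => exact fun r hr => hs r hr
  | succ d ih =>
    intro r hr
    by_cases hrK : K ≤ r
    · exact hs r hrK
    have h := hrec r (by omega)
    rwa [Finset.sum_range_succ, hc, Nat.sub_self, add_zero, one_smul,
      Finset.sum_eq_zero fun i hi => by
        rw [ih _ (by have := Finset.mem_range.mp hi; omega), smul_zero], zero_add] at h

section AnnihilatesWindow

variable {R : Type*} [CommRing R] {n m : ℕ}

/-- `(ξ, σ)` is a left annihilator of the first `J + 1` columns of `[X₀; H_K(u)]`, with the
block rows of `H_K(u)` weighted by `σ 0, …, σ (K - 1)`. -/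
def AnnihilatesWindow (xd : ℕ → Fin n → R) (ud : ℕ → Fin m → R) (K J : ℕ) (ξ : Fin n → R)
    (σ : ℕ → Fin m → R) : Prop :=
  ∀ j ≤ J, ξ ⬝ᵥ xd j + ∑ r ∈ Finset.range K, σ r ⬝ᵥ ud (j + r) = 0

variable {xd : ℕ → Fin n → R} {ud : ℕ → Fin m → R} {K J : ℕ} {ξ : Fin n → R}
  {σ : ℕ → Fin m → R}

theorem AnnihilatesWindow.mono {K' J' : ℕ} (h : AnnihilatesWindow xd ud K J ξ σ)
    (hσ : ∀ r, K ≤ r → σ r = 0) (hK : K ≤ K') (hJ : J' ≤ J) :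
    AnnihilatesWindow xd ud K' J' ξ σ := by
  intro j hj
  have htail : ∑ r ∈ Finset.Ico K K', σ r ⬝ᵥ ud (j + r) = 0 :=
    Finset.sum_eq_zero fun r hr => by rw [hσ r (Finset.mem_Ico.mp hr).1, zero_dotProduct]
  rw [← Finset.sum_range_add_sum_Ico _ hK, htail, add_zero]
  exact h j (hj.trans hJ)

theorem AnnihilatesWindow.sum_smul {ι : Type*} (t : Finset ι) (c : ι → R) {ξ : ι → Fin n → R}
    {σ : ι → ℕ → Fin m → R} (h : ∀ i ∈ t, AnnihilatesWindow xd ud K J (ξ i) (σ i)) :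
    AnnihilatesWindow xd ud K J (∑ i ∈ t, c i • ξ i) (∑ i ∈ t, c i • σ i) := by
  intro j hj
  have hterm : ∀ i ∈ t, c i * (ξ i ⬝ᵥ xd j + ∑ r ∈ Finset.range K, σ i r ⬝ᵥ ud (j + r)) = 0 :=
    fun i hi => by rw [h i hi j hj, mul_zero]
  simp only [Finset.sum_apply, Pi.smul_apply, sum_dotProduct, smul_dotProduct, smul_eq_mul]
  rw [Finset.sum_comm, ← Finset.sum_add_distrib, ← Finset.sum_eq_zero hterm]
  simp only [mul_add, Finset.mul_sum]

theorem AnnihilatesWindow.shift (A : Matrix (Fin n) (Fin n) R) (B : Matrix (Fin n) (Fin m) R)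
    (hdyn : ∀ t ≤ J, xd (t + 1) = A *ᵥ xd t + B *ᵥ ud t)
    (h : AnnihilatesWindow xd ud K (J + 1) ξ σ) {τ : ℕ → Fin m → R} (hτ₀ : τ 0 = ξ ᵥ* B)
    (hτ : ∀ r, τ (r + 1) = σ r) :
    AnnihilatesWindow xd ud (K + 1) J (ξ ᵥ* A) τ := by
  intro j hj
  have hj' := h (j + 1) (by omega)
  rw [hdyn j hj, dotProduct_add, dotProduct_mulVec, dotProduct_mulVec] at hj'
  have hsum : ∑ r ∈ Finset.range K, τ (r + 1) ⬝ᵥ ud (j + (r + 1))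
      = ∑ r ∈ Finset.range K, σ r ⬝ᵥ ud (j + 1 + r) :=
    Finset.sum_congr rfl fun r _ => by rw [hτ, ← add_assoc, add_right_comm]
  rw [Finset.sum_range_succ', hτ₀, add_zero, hsum]
  linear_combination hj'

theorem AnnihilatesWindow.shift_iterate (A : Matrix (Fin n) (Fin n) R)
    (B : Matrix (Fin n) (Fin m) R) {k : ℕ} {s : ℕ → Fin m → R}
    (hdyn : ∀ t < J + k, xd (t + 1) = A *ᵥ xd t + B *ᵥ ud t)
    (hs : ∀ e < k, s (k - 1 - e) = ξ ᵥ* (A ^ e * B))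
    (h : AnnihilatesWindow xd ud K (J + k) ξ fun r => s (r + k)) :
    ∀ i ≤ k, AnnihilatesWindow xd ud (K + i) (J + (k - i)) (ξ ᵥ* A ^ i)
      fun r => s (r + (k - i)) := by
  intro i
  induction i with
  | zero => simpa using h
  | succ i ih =>
    intro hi
    have h' := ih (by omega)
    rw [show J + (k - i) = J + (k - (i + 1)) + 1 by omega] at h'
    rw [pow_succ, ← vecMul_vecMul, ← add_assoc]
    refine h'.shift A B (fun t ht => hdyn t (by omega)) ?_ fun r => ?_
    · rw [vecMul_vecMul, ← hs i (by omega), zero_add, Nat.sub_sub, Nat.add_comm 1]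
    · rw [show r + 1 + (k - (i + 1)) = r + (k - i) by omega]

end AnnihilatesWindow

theorem vecMul_hankelMat {m L N₀ : ℕ} (u : ℕ → Fin m → ℝ) (w : Fin L × Fin m → ℝ)
    (j : Fin (N₀ - L + 1)) :
    (w ᵥ* hankelMat m L N₀ u) j = ∑ l : Fin L, (fun q => w (l, q)) ⬝ᵥ u (j + l) := by
  simp only [vecMul, dotProduct, hankelMat, of_apply, Fintype.sum_prod_type, add_comm]

theorem PersistentlyExciting.eq_zero_of_forall_sum_eq_zero {m K N₀ : ℕ} {u : ℕ → Fin m → ℝ}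
    (hPE : PersistentlyExciting m K N₀ u) {ζ : ℕ → Fin m → ℝ}
    (h : ∀ j ≤ N₀ - K, ∑ r ∈ Finset.range K, ζ r ⬝ᵥ u (j + r) = 0) :
    ∀ r < K, ζ r = 0 := by
  have hw := (rank_eq_card_height_iff _).mp (by rw [hPE]; simp [mul_comm])
    (fun p : Fin K × Fin m => ζ p.1 p.2) (by
      ext j
      rw [vecMul_hankelMat, Fin.sum_univ_eq_sum_range (fun r => ζ r ⬝ᵥ u (j + r))]
      exact h j (by omega))
  exact fun r hr => funext fun q => congrFun hw (⟨r, hr⟩, q)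

theorem Controllable.eq_zero_of_forall_vecMul_pow_mul_eq_zero {n m : ℕ}
    {A : Matrix (Fin n) (Fin n) ℝ} {B : Matrix (Fin n) (Fin m) ℝ} (h : Controllable A B)
    {ξ : Fin n → ℝ} (hξ : ∀ e < n, ξ ᵥ* (A ^ e * B) = 0) : ξ = 0 :=
  (rank_eq_card_height_iff _).mp (by rw [h]; simp) ξ
    (by ext ⟨e, q⟩; exact congrFun (hξ e e.isLt) q)

theorem eq_zero_of_annihilatesWindow {n m : ℕ} {A : Matrix (Fin n) (Fin n) ℝ}
    {B : Matrix (Fin n) (Fin m) ℝ} (hctrb : Controllable A B) {N₀ L : ℕ} (hLN : L + n ≤ N₀)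
    {ud : ℕ → Fin m → ℝ} {xd : ℕ → Fin n → ℝ}
    (hdyn : ∀ t < N₀, xd (t + 1) = A.mulVec (xd t) + B.mulVec (ud t))
    (hPE : PersistentlyExciting m (L + n) N₀ ud) {ξ : Fin n → ℝ} {η : ℕ → Fin m → ℝ}
    (hη : ∀ r, L ≤ r → η r = 0) (h : AnnihilatesWindow xd ud L (N₀ - L) ξ η) :
    ξ = 0 ∧ ∀ r, η r = 0 := by
  set s : ℕ → Fin m → ℝ := fun r => if r < n then ξ ᵥ* (A ^ (n - 1 - r) * B) else η (r - n)
  have hs_ctrb : ∀ e < n, s (n - 1 - e) = ξ ᵥ* (A ^ e * B) := fun e he => by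
    simp only [s, if_pos (by omega : n - 1 - e < n), show n - 1 - (n - 1 - e) = e by omega]
  have hs_η : ∀ r, s (r + n) = η r := fun r => by simp [s]
  have hs_zero : ∀ r, L + n ≤ r → s r = 0 := fun r hr => by
    rw [show r = r - n + n by omega, hs_η, hη _ (by omega)]
  have hshift := AnnihilatesWindow.shift_iterate A B (J := N₀ - L - n) (s := s)
    (fun t ht => hdyn t (by omega)) hs_ctrb
    (by rw [Nat.sub_add_cancel (by omega)]; simpa only [hs_η] using h)
  have hpad : ∀ k ∈ Finset.range (n + 1), AnnihilatesWindow xd ud (L + n) (N₀ - (L + n))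
      (ξ ᵥ* A ^ k) fun r => s (r + (n - k)) := fun k hk => by
    rw [Finset.mem_range] at hk
    exact (hshift k (by omega)).mono (fun r hr => hs_zero _ (by omega)) (by omega) (by omega)
  have hζ := AnnihilatesWindow.sum_smul _ A.charpoly.coeff hpad
  have hCH := A.sum_charpoly_coeff_smul_vecMul_pow ξ
  rw [Fintype.card_fin] at hCH
  rw [hCH] at hζ
  have hζ0 := hPE.eq_zero_of_forall_sum_eq_zero fun j hj => by
    simpa only [zero_dotProduct, zero_add] using hζ j (by omega)
  have hs : ∀ r, s r = 0 :=
    eq_zero_of_backward_recurrence A.charpoly.coeff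
      (by simpa using (charpoly_monic A).coeff_natDegree) s hs_zero
      fun r hr => by simpa only [Finset.sum_apply, Pi.smul_apply] using hζ0 r hr
  exact ⟨hctrb.eq_zero_of_forall_vecMul_pow_mul_eq_zero fun e he =>
      (hs_ctrb e he).symm.trans (hs _), fun r => (hs_η r).symm.trans (hs _)⟩

/-- **Key rank lemma supporting the fundamental lemma.** If `(A, B)` is
controllable, `(u^d, x^d)` satisfies the state recursion on `0, …, N₀ - 1`, and
`u^d` is persistently exciting of order `L + n`, then the matrix
`[X₀; H_L(u^d)]`, where `X₀ = [x^d(0) ⋯ x^d(N₀ - L)]`, has full row rank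
`n + m L`. -/
theorem state_input_full_row_rank {n m : ℕ}
    (A : Matrix (Fin n) (Fin n) ℝ) (B : Matrix (Fin n) (Fin m) ℝ)
    (hctrb : Controllable A B)
    (N₀ L : ℕ) (hLN : L + n ≤ N₀)
    (ud : ℕ → Fin m → ℝ) (xd : ℕ → Fin n → ℝ)
    (hdyn : ∀ t < N₀, xd (t + 1) = A.mulVec (xd t) + B.mulVec (ud t))
    (hPE : PersistentlyExciting m (L + n) N₀ ud) :
    (Matrix.fromRows
        (Matrix.of fun (i : Fin n) (j : Fin (N₀ - L + 1)) => xd (j : ℕ) i)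
        (hankelMat m L N₀ ud)).rank = n + m * L := by
  rw [show n + m * L = Fintype.card (Fin n ⊕ Fin L × Fin m) by simp [mul_comm],
    rank_eq_card_height_iff]
  intro v hv
  set η : ℕ → Fin m → ℝ := fun l q => if hl : l < L then v (.inr (⟨l, hl⟩, q)) else 0
  have hann : AnnihilatesWindow xd ud L (N₀ - L) (v ∘ Sum.inl) η := by
    intro j hj
    have hj' := congrFun hv ⟨j, by omega⟩
    rw [vecMul_fromRows, Pi.add_apply, vecMul_hankelMat] at hj'
    rw [← Fin.sum_univ_eq_sum_range (fun l => η l ⬝ᵥ ud (j + l))]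
    simp only [η, Fin.is_lt, dite_true]
    exact hj'
  obtain ⟨hξ, hη⟩ := eq_zero_of_annihilatesWindow hctrb hLN hdyn hPE
    (fun r hr => funext fun q => by simp [η, not_lt.mpr hr]) hann
  ext (i | ⟨l, q⟩)
  · exact congrFun hξ i
  · simpa [η] using congrFun (hη l) q
end

section
/- The convex hull of a control invariant set of consistent extended states is control invariant: Let (A,B,C,D) define a discrete-time LTI system with (A,C) observable, let T_ini ≥ n, and let U ⊆ ℝ^m be convex. Let Ξ ⊆ ℝ^{(m+p)T_ini} be a set of extended states, each of which is the extended state at time 0 of some trajectory of the system, and suppose Ξ is control invariant for the system under input constraint set U, with the successor extended state again consistent with a system trajectory. Then Conv(Ξ), the convex hull of Ξ, is also a control invariant set for the system under input constraint set U. -/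
open Matrix

/-- `(u, x, y)` is a trajectory of the LTI system `(A, B, C, D)`. -/
def IsTraj {n m p : ℕ} (A : Matrix (Fin n) (Fin n) ℝ) (B : Matrix (Fin n) (Fin m) ℝ)
    (C : Matrix (Fin p) (Fin n) ℝ) (D : Matrix (Fin p) (Fin m) ℝ)
    (u : ℕ → Fin m → ℝ) (x : ℕ → Fin n → ℝ) (y : ℕ → Fin p → ℝ) : Prop :=
  ∀ t : ℕ, x (t + 1) = A.mulVec (x t) + B.mulVec (u t) ∧
    y t = C.mulVec (x t) + D.mulVec (u t)

/-- The extended state `ξ_t = (u(t-T), …, u(t-1), y(t-T), …, y(t-1))`. -/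
def ExtState (m p T : ℕ) (u : ℕ → Fin m → ℝ) (y : ℕ → Fin p → ℝ) (t : ℕ) :
    (Fin T → Fin m → ℝ) × (Fin T → Fin p → ℝ) :=
  (fun i => u (t - T + (i : ℕ)), fun i => y (t - T + (i : ℕ)))

/-- `Ξ` is a control invariant set of extended states for the system `(A, B, C, D)`
under input constraint set `U`: whenever the extended state of a trajectory lies in
`Ξ`, some admissible input keeps the next extended state in `Ξ`. -/
def ControlInvariant {n m p : ℕ} (A : Matrix (Fin n) (Fin n) ℝ)
    (B : Matrix (Fin n) (Fin m) ℝ) (C : Matrix (Fin p) (Fin n) ℝ)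
    (D : Matrix (Fin p) (Fin m) ℝ) (T : ℕ) (U : Set (Fin m → ℝ))
    (Ξ : Set ((Fin T → Fin m → ℝ) × (Fin T → Fin p → ℝ))) : Prop :=
  ∀ u x y, IsTraj A B C D u x y → ∀ t : ℕ, T ≤ t → ExtState m p T u y t ∈ Ξ →
    ∃ v ∈ U, ExtState m p T (Function.update u t v)
      (Function.update y t (C.mulVec (x t) + D.mulVec v)) (t + 1) ∈ Ξ

/-! Write a point of `Conv(Ξ)` as `∑ wᵢ ξᵢ` with `ξᵢ ∈ Ξ` realised by trajectories
`(uᵢ, xᵢ, yᵢ)`, and pick inputs `vᵢ ∈ U` keeping the successor of `ξᵢ` in `Ξ`. Trajectories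
form a vector space, and since `T_ini ≥ n` and `(A, C)` is observable, an extended state
determines the current state; so a trajectory with extended state `∑ wᵢ ξᵢ` is currently in
the state `∑ wᵢ xᵢ(T_ini)`. The successor of an extended state is linear in the extended
state, the input and the output, so the input `∑ wᵢ vᵢ ∈ U` leads to `∑ wᵢ ξᵢ⁺ ∈ Conv(Ξ)`. -/

theorem Matrix.mulVec_injective_of_rank_eq_card {m n K : Type*} [Fintype n]
    [Field K] (M : Matrix m n K) (h : M.rank = Fintype.card n) :
    Function.Injective M.mulVec :=
  Matrix.mulVec_injective_iff.2 <| linearIndependent_iff_card_eq_finrank_span.2 <| by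
    rw [← h, Matrix.rank_eq_finrank_span_cols]
    rfl

section Window

variable {M : Type*} {T : ℕ}

def shiftIn (ξ : Fin T → M) (v : M) : Fin T → M :=
  fun i => if h : (i : ℕ) + 1 < T then ξ ⟨i + 1, h⟩ else v

theorem shiftIn_sum_smul {R ι : Type*} [Semiring R] [AddCommMonoid M] [Module R M]
    (s : Finset ι) (w : ι → R) (ξ : ι → Fin T → M) (v : ι → M) :
    shiftIn (∑ i ∈ s, w i • ξ i) (∑ i ∈ s, w i • v i) = ∑ i ∈ s, w i • shiftIn (ξ i) (v i) := by
  funext j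
  simp only [shiftIn, Finset.sum_apply, Pi.smul_apply]
  split_ifs <;> rfl

theorem extState_update_succ {m p : ℕ} {u : ℕ → Fin m → ℝ} {y : ℕ → Fin p → ℝ} {t : ℕ}
    (v : Fin m → ℝ) (w : Fin p → ℝ) (ht : T ≤ t) :
    ExtState m p T (Function.update u t v) (Function.update y t w) (t + 1) =
      (shiftIn (ExtState m p T u y t).1 v, shiftIn (ExtState m p T u y t).2 w) := by
  refine Prod.ext (funext fun i => ?_) (funext fun i => ?_) <;>
  · simp only [ExtState, shiftIn]
    split_ifs
    · rw [Function.update_of_ne (by omega)]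
      congr 1
      omega
    · rw [show t + 1 - T + i = t by omega, Function.update_self]

theorem extState_sum_smul {m p : ℕ} {ι : Type*} (s : Finset ι) (w : ι → ℝ)
    (u : ι → ℕ → Fin m → ℝ) (y : ι → ℕ → Fin p → ℝ) (t : ℕ) :
    ExtState m p T (∑ i ∈ s, w i • u i) (∑ i ∈ s, w i • y i) t =
      ∑ i ∈ s, w i • ExtState m p T (u i) (y i) t := by
  ext <;> simp [ExtState, Prod.fst_sum, Prod.snd_sum, Finset.sum_apply]

end Window

section Trajectories

variable {n m p : ℕ} {A : Matrix (Fin n) (Fin n) ℝ} {B : Matrix (Fin n) (Fin m) ℝ}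
  {C : Matrix (Fin p) (Fin n) ℝ} {D : Matrix (Fin p) (Fin m) ℝ}
  {u u' : ℕ → Fin m → ℝ} {x x' : ℕ → Fin n → ℝ} {y y' : ℕ → Fin p → ℝ}

theorem IsTraj.sum_smul {ι : Type*} (s : Finset ι) (w : ι → ℝ) {U : ι → ℕ → Fin m → ℝ}
    {X : ι → ℕ → Fin n → ℝ} {Y : ι → ℕ → Fin p → ℝ}
    (h : ∀ i ∈ s, IsTraj A B C D (U i) (X i) (Y i)) :
    IsTraj A B C D (∑ i ∈ s, w i • U i) (∑ i ∈ s, w i • X i) (∑ i ∈ s, w i • Y i) := by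
  intro t
  simp only [Finset.sum_apply, Pi.smul_apply, mulVec_sum, mulVec_smul, ← Finset.sum_add_distrib,
    ← smul_add]
  exact ⟨Finset.sum_congr rfl fun i hi => by rw [(h i hi t).1],
    Finset.sum_congr rfl fun i hi => by rw [(h i hi t).2]⟩

theorem IsTraj.sub (h : IsTraj A B C D u x y) (h' : IsTraj A B C D u' x' y') :
    IsTraj A B C D (u - u') (x - x') (y - y') := by
  intro t
  simp only [Pi.sub_apply, mulVec_sub, (h t).1, (h' t).1, (h t).2, (h' t).2]
  constructor <;> abel

theorem IsTraj.comp_add_left (h : IsTraj A B C D u x y) (s : ℕ) :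
    IsTraj A B C D (fun k => u (s + k)) (fun k => x (s + k)) (fun k => y (s + k)) :=
  fun k => h (s + k)

theorem Observable.eq_zero_of_mulVec_pow_eq_zero (hobs : Observable A C) {d : Fin n → ℝ}
    (h : ∀ k < n, C *ᵥ (A ^ k *ᵥ d) = 0) : d = 0 := by
  refine (obsMat A C n).mulVec_injective_of_rank_eq_card (by rw [hobs, Fintype.card_fin]) ?_
  rw [mulVec_zero]
  funext ⟨k, i⟩
  show ((C * A ^ (k : ℕ)) *ᵥ d) i = 0
  rw [← mulVec_mulVec, h k k.2]
  rfl

theorem IsTraj.state_eq_zero_of_window_eq_zero (hobs : Observable A C) {T : ℕ} (hT : n ≤ T)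
    (h : IsTraj A B C D u x y) (hu : ∀ k < T, u k = 0) (hy : ∀ k < T, y k = 0) : x T = 0 := by
  have hfree : ∀ k ≤ T, x k = A ^ k *ᵥ x 0 := by
    intro k hk
    induction k with
    | zero => simp
    | succ k ih =>
      rw [(h k).1, hu k (by omega), mulVec_zero, add_zero, ih (by omega), mulVec_mulVec,
        pow_succ']
  have hx₀ : x 0 = 0 := hobs.eq_zero_of_mulVec_pow_eq_zero fun k hk => by
    have hyk := (h k).2
    rw [hy k (by omega), hu k (by omega), mulVec_zero, add_zero, hfree k (by omega)] at hyk
    exact hyk.symm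
  rw [hfree T le_rfl, hx₀, mulVec_zero]

theorem IsTraj.state_eq_of_extState_eq (hobs : Observable A C) {T : ℕ} (hT : n ≤ T)
    (h : IsTraj A B C D u x y) (h' : IsTraj A B C D u' x' y') {t t' : ℕ} (ht : T ≤ t)
    (ht' : T ≤ t') (hξ : ExtState m p T u y t = ExtState m p T u' y' t') : x t = x' t' := by
  have hu : ∀ k < T, u (t - T + k) = u' (t' - T + k) := fun k hk =>
    congrFun (congrArg Prod.fst hξ) ⟨k, hk⟩
  have hy : ∀ k < T, y (t - T + k) = y' (t' - T + k) := fun k hk =>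
    congrFun (congrArg Prod.snd hξ) ⟨k, hk⟩
  have hdiff := ((h.comp_add_left (t - T)).sub
    (h'.comp_add_left (t' - T))).state_eq_zero_of_window_eq_zero hobs hT
      (fun k hk => sub_eq_zero.2 (hu k hk)) (fun k hk => sub_eq_zero.2 (hy k hk))
  rwa [Pi.sub_apply, sub_eq_zero, Nat.sub_add_cancel ht, Nat.sub_add_cancel ht'] at hdiff

end Trajectories

/-- **The convex hull of a control invariant set of consistent extended states is
control invariant.** Suppose `(A, C)` is observable, `T_ini ≥ n`, `U` is convex,
every element of `Ξ` is the extended state of some trajectory of the system, and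
`Ξ` is control invariant under `U`. Then `Conv(Ξ)` is also control invariant
under `U`. -/
theorem convexHull_control_invariant {n m p : ℕ}
    (A : Matrix (Fin n) (Fin n) ℝ) (B : Matrix (Fin n) (Fin m) ℝ)
    (C : Matrix (Fin p) (Fin n) ℝ) (D : Matrix (Fin p) (Fin m) ℝ)
    (hobs : Observable A C) (T : ℕ) (hT : n ≤ T)
    (U : Set (Fin m → ℝ)) (hU : Convex ℝ U)
    (Ξ : Set ((Fin T → Fin m → ℝ) × (Fin T → Fin p → ℝ)))
    (hcons : ∀ ξ ∈ Ξ, ∃ u x y, IsTraj A B C D u x y ∧ ExtState m p T u y T = ξ)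
    (hinv : ControlInvariant A B C D T U Ξ) :
    ControlInvariant A B C D T U (convexHull ℝ Ξ) := by
  intro u x y htraj t ht hξ
  obtain ⟨ι, s, w, z, hw₀, hw₁, hzΞ, hz⟩ := (convexHull_eq Ξ).subset hξ
  rw [Finset.centerMass_eq_of_sum_1 _ _ hw₁] at hz
  choose! ui xi yi htraj_i hext_i using fun i (hi : i ∈ s) => hcons _ (hzΞ i hi)
  choose! v hvU hvΞ using fun i (hi : i ∈ s) =>
    hinv _ _ _ (htraj_i i hi) T le_rfl ((hext_i i hi).symm ▸ hzΞ i hi)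
  have hx : x t = ∑ i ∈ s, w i • xi i T := by
    rw [htraj.state_eq_of_extState_eq hobs hT (IsTraj.sum_smul s w htraj_i) ht le_rfl
      (by rw [extState_sum_smul, ← hz]; exact Finset.sum_congr rfl fun i hi => by rw [hext_i i hi])]
    simp only [Finset.sum_apply, Pi.smul_apply]
  refine ⟨∑ i ∈ s, w i • v i, hU.sum_mem hw₀ hw₁ hvU, ?_⟩
  have hsucc : ExtState m p T (Function.update u t (∑ i ∈ s, w i • v i))
      (Function.update y t (C *ᵥ x t + D *ᵥ ∑ i ∈ s, w i • v i)) (t + 1) =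
      ∑ i ∈ s, w i • ExtState m p T (Function.update (ui i) T (v i))
        (Function.update (yi i) T (C *ᵥ xi i T + D *ᵥ v i)) (T + 1) := by
    rw [extState_update_succ _ _ ht, ← hz, hx, Prod.fst_sum, Prod.snd_sum]
    simp only [Prod.smul_fst, Prod.smul_snd, mulVec_sum, mulVec_smul, ← Finset.sum_add_distrib,
      ← smul_add, shiftIn_sum_smul]
    refine Prod.ext ?_ ?_ <;>
    · simp only [Prod.fst_sum, Prod.snd_sum, Prod.smul_fst, Prod.smul_snd]
      refine Finset.sum_congr rfl fun i hi => ?_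
      rw [extState_update_succ _ _ le_rfl, hext_i i hi]
  rw [hsucc]
  exact (convex_convexHull ℝ Ξ).sum_mem hw₀ hw₁ fun i hi => subset_convexHull ℝ Ξ (hvΞ i hi)
end
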